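/- Define ρ(x) = ϑ(x) − x. Then ∑_{n ≤ x} ρ(n)/n² = O(1), i.e., the partial sums ∑_{n ≤ x} (ϑ(n) − n)/n² are bounded uniformly in x. -/

import Mathlib

open Finset Filter Real Asymptotics

noncomputable def primesUpTo (x : ℝ) : Finset ℕ := (Finset.Icc 1 ⌊x⌋₊).filter Nat.Prime

noncomputable def cheTheta (x : ℝ) : ℝ := ∑ p ∈ primesUpTo x, Real.log p

noncomputable def chePsi (x : ℝ) : ℝ := ∑ n ∈ Finset.Icc 1 ⌊x⌋₊, ArithmeticFunction.vonMangoldt n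

noncomputable def primePi (x : ℝ) : ℕ := (primesUpTo x).card

noncomputable def selTheta (x : ℝ) (n : ℕ) : ℝ :=
  ∑ d ∈ n.divisors, (ArithmeticFunction.moebius d : ℝ) * (Real.log (x / d)) ^ 2

/-!
Since `ψ(n) - ϑ(n) = O(√n)` and `∑ √n / n²` converges, it suffices to show that
`∑_{n ≤ N} ψ(n)/n² - ∑_{n ≤ N} 1/n` is bounded. Exchanging the order of summation,
`∑_{n ≤ N} ψ(n)/n² = ∑_{d ≤ N} Λ(d) ∑_{d ≤ n ≤ N} 1/n²`, and the inner sum lies between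
`1/d - 1/(N+1)` and `1/d + 1/d²` by telescoping. As `Λ(d) ≤ 2√d` and `ψ(N) = O(N)`, this is
`∑_{d ≤ N} Λ(d)/d + O(1)`, which is `log N + O(1)` (Mertens) because
`log N! = ∑_{d ≤ N} Λ(d) ⌊N/d⌋` and `N log N - N ≤ log N! ≤ N log N`.
The harmonic sum is `log N + O(1)` as well.
-/

open scoped Chebyshev ArithmeticFunction.vonMangoldt

lemma cheTheta_eq_theta (x : ℝ) : cheTheta x = θ x := by
  rw [cheTheta, primesUpTo, Chebyshev.theta, ← Finset.Icc_add_one_left_eq_Ioc, zero_add]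

lemma sum_Ioc_log_eq_log_factorial (N : ℕ) : ∑ n ∈ Ioc 0 N, Real.log n = Real.log N.factorial := by
  induction N with
  | zero => simp
  | succ N ih =>
    rw [sum_Ioc_succ_top N.zero_le, ih, Nat.factorial_succ, Nat.cast_mul,
      Real.log_mul (by positivity) (by positivity), add_comm]

lemma sum_Ioc_log_le (N : ℕ) : ∑ n ∈ Ioc 0 N, Real.log n ≤ N * Real.log N := by
  rw [sum_Ioc_log_eq_log_factorial, ← Real.log_pow]
  rcases N.eq_zero_or_pos with rfl | hN
  · simp
  exact Real.log_le_log (by positivity) (by exact_mod_cast N.factorial_le_pow)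

lemma le_sum_Ioc_log (N : ℕ) : N * Real.log N - N ≤ ∑ n ∈ Ioc 0 N, Real.log n := by
  rw [sum_Ioc_log_eq_log_factorial]
  have h := Real.pow_div_factorial_le_exp N N.cast_nonneg N
  rcases N.eq_zero_or_pos with rfl | hN
  · simp
  rw [div_le_iff₀ (by positivity), ← Real.log_le_log_iff (by positivity) (by positivity),
    Real.log_mul (by positivity) (by positivity), Real.log_exp, Real.log_pow] at h
  linarith

lemma sum_Ioc_log_eq_sum_vonMangoldt_mul_div (N : ℕ) :
    ∑ n ∈ Ioc 0 N, Real.log n = ∑ d ∈ Ioc 0 N, Λ d * (N / d : ℕ) := by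
  rw [← ArithmeticFunction.sum_Ioc_mul_zeta_eq_sum, ArithmeticFunction.vonMangoldt_mul_zeta]
  rfl

lemma sum_vonMangoldt_div_mul_le_sum_Ioc_log (N : ℕ) :
    N * ∑ d ∈ Ioc 0 N, Λ d / d - ψ N ≤ ∑ n ∈ Ioc 0 N, Real.log n := by
  rw [sum_Ioc_log_eq_sum_vonMangoldt_mul_div, Chebyshev.psi, Nat.floor_natCast, mul_sum,
    ← sum_sub_distrib]
  gcongr with d hd
  have hd : 0 < d := (mem_Ioc.mp hd).1
  have hfloor : (N : ℝ) / d ≤ (N / d : ℕ) + 1 := by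
    rw [div_le_iff₀ (by positivity), add_one_mul]
    exact_mod_cast (Nat.lt_div_mul_add hd).le
  calc (N : ℝ) * (Λ d / d) - Λ d = Λ d * ((N : ℝ) / d - 1) := by ring
    _ ≤ Λ d * (N / d : ℕ) := by gcongr; linarith

lemma sum_Ioc_log_le_mul_sum_vonMangoldt_div (N : ℕ) :
    ∑ n ∈ Ioc 0 N, Real.log n ≤ N * ∑ d ∈ Ioc 0 N, Λ d / d := by
  rw [sum_Ioc_log_eq_sum_vonMangoldt_mul_div, mul_sum]
  refine sum_le_sum fun d _ => ?_
  calc Λ d * (N / d : ℕ) ≤ Λ d * ((N : ℝ) / d) :=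
        mul_le_mul_of_nonneg_left Nat.cast_div_le ArithmeticFunction.vonMangoldt_nonneg
    _ = N * (Λ d / d) := by ring

lemma log_sub_one_le_sum_vonMangoldt_div {N : ℕ} (hN : 0 < N) :
    Real.log N - 1 ≤ ∑ d ∈ Ioc 0 N, Λ d / d := by
  have h := (le_sum_Ioc_log N).trans (sum_Ioc_log_le_mul_sum_vonMangoldt_div N)
  have hN' : (0 : ℝ) < N := by exact_mod_cast hN
  rw [← mul_le_mul_iff_right₀ hN']
  linarith

lemma sum_vonMangoldt_div_le_log_add {N : ℕ} (hN : 0 < N) :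
    ∑ d ∈ Ioc 0 N, Λ d / d ≤ Real.log N + (Real.log 4 + 4) := by
  have h := (sum_vonMangoldt_div_mul_le_sum_Ioc_log N).trans (sum_Ioc_log_le N)
  have hψ := Chebyshev.psi_le_const_mul_self (N.cast_nonneg (α := ℝ))
  have hN' : (0 : ℝ) < N := by exact_mod_cast hN
  rw [← mul_le_mul_iff_right₀ hN']
  linarith

lemma sum_Ioc_sum_Ioc_mul {R : Type*} [NonUnitalNonAssocSemiring R] (f g : ℕ → R) (N : ℕ) :
    ∑ n ∈ Ioc 0 N, (∑ d ∈ Ioc 0 n, f d) * g n = ∑ d ∈ Ioc 0 N, f d * ∑ n ∈ Icc d N, g n := by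
  simp_rw [sum_mul, mul_sum]
  exact sum_comm' fun n d => by simp only [mem_Ioc, mem_Icc]; omega

lemma inv_sub_inv_succ_le_inv_sq {x : ℝ} (hx : 0 < x) : x⁻¹ - (x + 1)⁻¹ ≤ (x ^ 2)⁻¹ := by
  rw [inv_sub_inv hx.ne' (by positivity), add_sub_cancel_left, one_div, sq]
  gcongr
  linarith

lemma inv_succ_sq_le_inv_sub_inv_succ {x : ℝ} (hx : 0 < x) :
    ((x + 1) ^ 2)⁻¹ ≤ x⁻¹ - (x + 1)⁻¹ := by
  rw [inv_sub_inv hx.ne' (by positivity), add_sub_cancel_left, one_div, sq]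
  gcongr
  linarith

lemma inv_sub_inv_le_sum_Icc_inv_sq {d : ℕ} (hd : 0 < d) (N : ℕ) :
    (d : ℝ)⁻¹ - ((N : ℝ) + 1)⁻¹ ≤ ∑ n ∈ Icc d N, ((n : ℝ) ^ 2)⁻¹ := by
  induction N with
  | zero =>
    rw [Icc_eq_empty (by omega)]
    simp only [sum_empty, CharP.cast_eq_zero, zero_add, inv_one, sub_nonpos]
    exact inv_le_one_of_one_le₀ (by exact_mod_cast hd)
  | succ N ih =>
    rcases le_or_gt d (N + 1) with h | h
    · rw [sum_Icc_succ_top h]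
      have := inv_sub_inv_succ_le_inv_sq (x := (N : ℝ) + 1) (by positivity)
      push_cast
      linarith
    · rw [Icc_eq_empty (by omega), sum_empty, sub_nonpos]
      gcongr
      exact_mod_cast h

lemma sum_Icc_inv_sq_le {d : ℕ} (hd : 0 < d) (N : ℕ) :
    ∑ n ∈ Icc d N, ((n : ℝ) ^ 2)⁻¹ ≤ (d : ℝ)⁻¹ + ((d : ℝ) ^ 2)⁻¹ := by
  rcases lt_or_ge N d with hN | hN
  · rw [Icc_eq_empty (by omega), sum_empty]
    positivity
  have telescope : ∑ n ∈ Icc d N, ((n : ℝ) ^ 2)⁻¹ ≤ (d : ℝ)⁻¹ + ((d : ℝ) ^ 2)⁻¹ - (N : ℝ)⁻¹ := by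
    induction N, hN using Nat.le_induction with
    | base => simp
    | succ N hdN ih =>
      rw [sum_Icc_succ_top (by omega)]
      have := inv_succ_sq_le_inv_sub_inv_succ (x := (N : ℝ)) (by exact_mod_cast hd.trans_le hdN)
      push_cast
      linarith
  have : (0 : ℝ) ≤ (N : ℝ)⁻¹ := by positivity
  linarith

lemma sum_psi_div_sq_eq (N : ℕ) :
    ∑ n ∈ Ioc 0 N, ψ n / (n : ℝ) ^ 2 = ∑ d ∈ Ioc 0 N, Λ d * ∑ n ∈ Icc d N, ((n : ℝ) ^ 2)⁻¹ := by
  simp_rw [Chebyshev.psi, Nat.floor_natCast, div_eq_mul_inv]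
  exact sum_Ioc_sum_Ioc_mul _ _ N

lemma summable_sqrt_div_sq : Summable fun n : ℕ => √n / (n : ℝ) ^ 2 := by
  refine (Real.summable_nat_rpow_inv.mpr (by norm_num : (1 : ℝ) < 3 / 2)).congr fun n => ?_
  rcases n.eq_zero_or_pos with rfl | hn
  · simp
  have hn' : (0 : ℝ) < n := by exact_mod_cast hn
  rw [Real.sqrt_eq_rpow, ← Real.rpow_natCast, ← Real.rpow_sub hn', ← Real.rpow_neg hn'.le]
  norm_num

lemma sum_div_sq_le_of_le_mul_sqrt {a : ℕ → ℝ} {C : ℝ} (ha : ∀ n, 0 ≤ a n)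
    (haC : ∀ n, a n ≤ C * √n) (s : Finset ℕ) :
    ∑ n ∈ s, a n / (n : ℝ) ^ 2 ≤ C * ∑' n : ℕ, √n / (n : ℝ) ^ 2 := by
  have hC : 0 ≤ C := by simpa using (ha 1).trans (haC 1)
  calc ∑ n ∈ s, a n / (n : ℝ) ^ 2 ≤ ∑ n ∈ s, C * (√n / (n : ℝ) ^ 2) := by
        gcongr with n
        rw [← mul_div_assoc]
        gcongr
        exact haC n
    _ ≤ C * ∑' n : ℕ, √n / (n : ℝ) ^ 2 := by
        rw [← mul_sum]
        gcongr
        exact summable_sqrt_div_sq.sum_le_tsum s fun n _ => by positivity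

lemma vonMangoldt_le_two_mul_sqrt (n : ℕ) : Λ n ≤ 2 * √n :=
  calc Λ n ≤ Real.log n := ArithmeticFunction.vonMangoldt_le_log
    _ ≤ (n : ℝ) ^ (1 / 2 : ℝ) / (1 / 2) := Real.log_le_rpow_div n.cast_nonneg (by norm_num)
    _ = 2 * √n := by rw [Real.sqrt_eq_rpow]; ring

lemma sum_psi_div_sq_le {N : ℕ} (hN : 0 < N) :
    ∑ n ∈ Ioc 0 N, ψ n / (n : ℝ) ^ 2 ≤
      Real.log N + (Real.log 4 + 4) + 2 * ∑' n : ℕ, √n / (n : ℝ) ^ 2 := by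
  have hΛ := sum_div_sq_le_of_le_mul_sqrt (fun n => ArithmeticFunction.vonMangoldt_nonneg)
    vonMangoldt_le_two_mul_sqrt (Ioc 0 N)
  have hmain := sum_vonMangoldt_div_le_log_add hN
  calc ∑ n ∈ Ioc 0 N, ψ n / (n : ℝ) ^ 2
      ≤ ∑ d ∈ Ioc 0 N, Λ d * ((d : ℝ)⁻¹ + ((d : ℝ) ^ 2)⁻¹) := by
        rw [sum_psi_div_sq_eq]
        gcongr with d hd
        exact sum_Icc_inv_sq_le (mem_Ioc.mp hd).1 N
    _ = ∑ d ∈ Ioc 0 N, Λ d / d + ∑ d ∈ Ioc 0 N, Λ d / (d : ℝ) ^ 2 := by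
        simp only [mul_add, sum_add_distrib, div_eq_mul_inv]
    _ ≤ _ := by linarith

lemma le_sum_psi_div_sq {N : ℕ} (hN : 0 < N) :
    Real.log N - 1 - (Real.log 4 + 4) ≤ ∑ n ∈ Ioc 0 N, ψ n / (n : ℝ) ^ 2 := by
  have hmain := log_sub_one_le_sum_vonMangoldt_div hN
  have hψ : ψ N / ((N : ℝ) + 1) ≤ Real.log 4 + 4 := by
    rw [div_le_iff₀ (by positivity)]
    nlinarith [Chebyshev.psi_le_const_mul_self (N.cast_nonneg (α := ℝ)), Real.log_nonneg
      (by norm_num : (1 : ℝ) ≤ 4)]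
  calc Real.log N - 1 - (Real.log 4 + 4) ≤ ∑ d ∈ Ioc 0 N, Λ d / d - ψ N / ((N : ℝ) + 1) := by
        linarith
    _ = ∑ d ∈ Ioc 0 N, Λ d * ((d : ℝ)⁻¹ - ((N : ℝ) + 1)⁻¹) := by
        simp only [mul_sub, sum_sub_distrib, div_eq_mul_inv, Chebyshev.psi, Nat.floor_natCast,
          sum_mul]
    _ ≤ ∑ n ∈ Ioc 0 N, ψ n / (n : ℝ) ^ 2 := by
        rw [sum_psi_div_sq_eq]
        gcongr with d hd
        exact inv_sub_inv_le_sum_Icc_inv_sq (mem_Ioc.mp hd).1 N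

lemma sum_Ioc_inv_eq_harmonic (N : ℕ) : ∑ n ∈ Ioc 0 N, (n : ℝ)⁻¹ = harmonic N := by
  rw [harmonic_eq_sum_Icc, Rat.cast_sum, ← Finset.Icc_add_one_left_eq_Ioc, zero_add]
  push_cast
  rfl

lemma log_le_harmonic {N : ℕ} (hN : 0 < N) : Real.log N ≤ harmonic N :=
  (Real.log_le_log (by exact_mod_cast hN) (by push_cast; linarith)).trans
    (log_add_one_le_harmonic N)

lemma sum_cheTheta_sub_div_sq_eq (N : ℕ) :
    ∑ n ∈ Icc 1 N, (cheTheta n - n) / (n : ℝ) ^ 2 =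
      ∑ n ∈ Ioc 0 N, ψ n / (n : ℝ) ^ 2 - ∑ n ∈ Ioc 0 N, (ψ n - θ n) / (n : ℝ) ^ 2 -
        harmonic N := by
  rw [← sum_Ioc_inv_eq_harmonic, ← Finset.Icc_add_one_left_eq_Ioc, zero_add, ← sum_sub_distrib,
    ← sum_sub_distrib]
  refine sum_congr rfl fun n hn => ?_
  have : (n : ℝ) ≠ 0 := Nat.cast_ne_zero.mpr (Nat.one_le_iff_ne_zero.mp (mem_Icc.mp hn).1)
  rw [cheTheta_eq_theta]
  field_simp
  ring

theorem stmt_19 :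
    ∃ C : ℝ, ∀ x : ℝ, 1 ≤ x →
      |∑ n ∈ Finset.Icc 1 ⌊x⌋₊, (cheTheta n - n) / (n : ℝ) ^ 2| ≤ C := by
  obtain ⟨C, hC⟩ := Chebyshev.psi_sub_theta_le_mul_sqrt
  set K := ∑' n : ℕ, √n / (n : ℝ) ^ 2
  have hK : 0 ≤ K := tsum_nonneg fun n => by positivity
  refine ⟨Real.log 4 + 6 + (2 + C) * K, fun x hx => ?_⟩
  have hN : 0 < ⌊x⌋₊ := Nat.floor_pos.mpr hx
  have hθ := sum_div_sq_le_of_le_mul_sqrt (fun n => sub_nonneg.mpr (Chebyshev.theta_le_psi n))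
    (fun n => hC n) (Ioc 0 ⌊x⌋₊)
  have hθ₀ : 0 ≤ ∑ n ∈ Ioc 0 ⌊x⌋₊, (ψ n - θ n) / (n : ℝ) ^ 2 :=
    sum_nonneg fun n _ => div_nonneg (sub_nonneg.mpr (Chebyshev.theta_le_psi n)) (by positivity)
  rw [sum_cheTheta_sub_div_sq_eq, abs_le]
  constructor <;> linarith [sum_psi_div_sq_le hN, le_sum_psi_div_sq hN, log_le_harmonic hN,
    harmonic_le_one_add_log ⌊x⌋₊]
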